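/- Let X ⊆ ℝ² be a compact set and X⁽¹⁾ ⊆ X a closed subset such that X \ X⁽¹⁾ is a disjoint union of open dyadic square interiors with null diameters and with boundaries contained in X⁽¹⁾. Let Y be a metric space and f : X⁽¹⁾ → Y continuous. Suppose for each square s (closure of a component of X \ X⁽¹⁾) there is a continuous extension h_s : s → Y of f|_{∂s} with diam h_s(s) ≤ 2·diam f(∂s). Then the function f̄ : X → Y defined by f̄ = f on X⁽¹⁾ and f̄ = h_s on each s is continuous. -/

import Mathlib

/-!
Near a point `x ∈ X₁` only finitely many squares have diameter above a given threshold; each of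
them is closed and meets `x` at most on its boundary, where its extension agrees with `f`, so
continuity of these finitely many extensions controls them. A square of small diameter meeting a
small neighbourhood of `x` has its whole boundary in a small ball around `x`, on which `f` stays
close to `f x` by continuity; the diameter bound `diam h_s(s) ≤ 2 · diam f(∂s)` then keeps `h_s`
close to `f x` on the whole square.
-/

/-- The closed dyadic square of generation `i` with lower-left corner `(j/2^i, k/2^i)`. -/
def dyadicSquare (i : ℕ) (j k : ℤ) : Set (ℝ × ℝ) :=
  Set.Icc ((j : ℝ) / 2 ^ i) ((j + 1 : ℝ) / 2 ^ i) ×ˢ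
    Set.Icc ((k : ℝ) / 2 ^ i) ((k + 1 : ℝ) / 2 ^ i)

open Metric Set Filter Topology Bornology

lemma IsCompact.frontier_nonempty {α : Type*} [TopologicalSpace α] [PreconnectedSpace α]
    [NoncompactSpace α] {s : Set α} (hs : IsCompact s) (hne : s.Nonempty) :
    (frontier s).Nonempty := by
  rw [nonempty_iff_ne_empty, Ne, frontier_eq_empty_iff]
  rintro (rfl | rfl)
  · exact hne.ne_empty rfl
  · exact noncompact_univ α hs

lemma dist_le_of_diam_image_le_two_mul {α Y : Type*} [PseudoMetricSpace Y] {s t : Set α}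
    {f h : α → Y} {c : Y} {η : ℝ} {y z : α} (hη : 0 ≤ η) (hbdd : IsBounded (h '' s))
    (hts : t ⊆ s) (hext : EqOn h f t) (hdiam : diam (h '' s) ≤ 2 * diam (f '' t))
    (hft : MapsTo f t (closedBall c η)) (hy : y ∈ s) (hz : z ∈ t) :
    dist (h y) c ≤ 5 * η := by
  have hft_diam : diam (f '' t) ≤ 2 * η := diam_le_of_subset_closedBall hη hft.image_subset
  have hyz : dist (h y) (h z) ≤ diam (h '' s) :=
    dist_le_diam_of_mem hbdd (mem_image_of_mem h hy) (mem_image_of_mem h (hts hz))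
  calc dist (h y) c ≤ dist (h y) (h z) + dist (f z) c := hext hz ▸ dist_triangle _ _ _
    _ ≤ 2 * (2 * η) + η := by gcongr; exacts [hyz.trans (hdiam.trans (by gcongr)), hft hz]
    _ = 5 * η := by ring

lemma dist_le_of_diam_lt {α Y : Type*} [MetricSpace α] [PreconnectedSpace α] [NoncompactSpace α]
    [PseudoMetricSpace Y] {s : Set α} {f h : α → Y} {x y : α} {δ η : ℝ} (hη : 0 ≤ η)
    (hs : IsCompact s) (hhs : ContinuousOn h s) (hext : EqOn h f (frontier s))
    (hdiam : diam (h '' s) ≤ 2 * diam (f '' frontier s))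
    (hf : ∀ w ∈ frontier s, dist w x < δ → dist (f w) (f x) ≤ η)
    (hy : y ∈ s) (hyx : dist y x < δ / 2) (hsδ : diam s < δ / 2) :
    dist (h y) (f x) ≤ 5 * η := by
  obtain ⟨z, hz⟩ := hs.frontier_nonempty ⟨y, hy⟩
  have hfr : frontier s ⊆ s := hs.isClosed.frontier_subset
  refine dist_le_of_diam_image_le_two_mul hη (hs.image_of_continuousOn hhs).isBounded hfr hext
    hdiam (fun w hw => hf w hw ?_) hy hz
  calc dist w x ≤ dist w y + dist y x := dist_triangle _ _ _
    _ < δ / 2 + δ / 2 :=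
      add_lt_add_of_le_of_lt ((dist_le_diam_of_mem hs.isBounded (hfr hw) hy).trans hsδ.le) hyx
    _ = δ := add_halves δ

lemma tendsto_nhdsWithin_of_notMem_interior {α Y : Type*} [TopologicalSpace α]
    [TopologicalSpace Y] {s : Set α} {f h : α → Y} {x : α} (hs : IsClosed s)
    (hx : x ∉ interior s) (hh : ContinuousOn h s) (hext : EqOn h f (frontier s)) :
    Tendsto h (𝓝[s] x) (𝓝 (f x)) := by
  by_cases hxs : x ∈ s
  · rw [← hext (hs.frontier_eq ▸ ⟨hxs, hx⟩)]
    exact hh x hxs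
  · rw [notMem_closure_iff_nhdsWithin_eq_bot.mp (hs.closure_eq.symm ▸ hxs)]
    exact tendsto_bot

section Glue

variable {α Y : Type*} [MetricSpace α] [PreconnectedSpace α] [NoncompactSpace α]
  [PseudoMetricSpace Y] {X X₁ : Set α} {sq : ℕ → Set α} {f g : α → Y} {h : ℕ → α → Y}

theorem continuousWithinAt_glue_of_mem (hcpt : ∀ n, IsCompact (sq n))
    (hfr : ∀ n, frontier (sq n) ⊆ X₁) (hcover : X \ X₁ = ⋃ n, interior (sq n))
    (hnull : ∀ ε > 0, {n | ε ≤ diam (sq n)}.Finite) (hf : ContinuousOn f X₁)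
    (hhcont : ∀ n, ContinuousOn (h n) (sq n)) (hhext : ∀ n, EqOn (h n) f (frontier (sq n)))
    (hhdiam : ∀ n, diam (h n '' sq n) ≤ 2 * diam (f '' frontier (sq n)))
    (hg₁ : EqOn g f X₁) (hg₂ : ∀ n, EqOn g (h n) (sq n)) {x : α} (hx : x ∈ X₁) :
    ContinuousWithinAt g X x := by
  rw [ContinuousWithinAt, hg₁ hx, Metric.tendsto_nhds]
  intro ε hε
  obtain ⟨δ, hδ, hfδ⟩ := Metric.continuousWithinAt_iff.mp (hf x hx) (ε / 6) (by positivity)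
  have hxint (n : ℕ) : x ∉ interior (sq n) := fun hxn =>
    (hcover.symm.subset (subset_iUnion (fun n => interior (sq n)) n hxn)).2 hx
  have hlarge : ∀ᶠ y in 𝓝 x, ∀ n ∈ {n | δ / 2 ≤ diam (sq n)}, y ∈ sq n →
      dist (h n y) (f x) < ε :=
    (eventually_all_finite (hnull _ (by positivity))).mpr fun n _ =>
      eventually_nhdsWithin_iff.mp <| Metric.tendsto_nhds.mp
        (tendsto_nhdsWithin_of_notMem_interior (hcpt n).isClosed (hxint n) (hhcont n) (hhext n))
        ε hε
  filter_upwards [nhdsWithin_le_nhds (hlarge.and (ball_mem_nhds x (half_pos hδ))),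
    self_mem_nhdsWithin] with y ⟨hyl, hyx⟩ hyX
  by_cases hy₁ : y ∈ X₁
  · rw [hg₁ hy₁]
    linarith [hfδ hy₁ (lt_trans hyx (half_lt_self hδ))]
  obtain ⟨n, hyn⟩ := mem_iUnion.mp (hcover.subset ⟨hyX, hy₁⟩)
  rw [hg₂ n (interior_subset hyn)]
  by_cases hn : δ / 2 ≤ diam (sq n)
  · exact hyl n hn (interior_subset hyn)
  · linarith [dist_le_of_diam_lt (by positivity : 0 ≤ ε / 6) (hcpt n) (hhcont n) (hhext n)
      (hhdiam n) (fun w hw hwx => (hfδ (hfr n hw) hwx).le) (interior_subset hyn) hyx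
      (not_le.mp hn)]

theorem continuousOn_glue (hcpt : ∀ n, IsCompact (sq n))
    (hfr : ∀ n, frontier (sq n) ⊆ X₁) (hcover : X \ X₁ = ⋃ n, interior (sq n))
    (hnull : ∀ ε > 0, {n | ε ≤ diam (sq n)}.Finite) (hf : ContinuousOn f X₁)
    (hhcont : ∀ n, ContinuousOn (h n) (sq n)) (hhext : ∀ n, EqOn (h n) f (frontier (sq n)))
    (hhdiam : ∀ n, diam (h n '' sq n) ≤ 2 * diam (f '' frontier (sq n)))
    (hg₁ : EqOn g f X₁) (hg₂ : ∀ n, EqOn g (h n) (sq n)) :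
    ContinuousOn g X := by
  intro x hx
  by_cases hx₁ : x ∈ X₁
  · exact continuousWithinAt_glue_of_mem hcpt hfr hcover hnull hf hhcont hhext hhdiam hg₁ hg₂ hx₁
  obtain ⟨n, hxn⟩ := mem_iUnion.mp (hcover.subset ⟨hx, hx₁⟩)
  exact (((hhcont n).congr (hg₂ n)).continuousAt
    (mem_interior_iff_mem_nhds.mp hxn)).continuousWithinAt

end Glue

lemma isCompact_dyadicSquare (i : ℕ) (j k : ℤ) : IsCompact (dyadicSquare i j k) :=
  isCompact_Icc.prod isCompact_Icc

theorem glue_extensions_continuous_general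
    {Y : Type*} [MetricSpace Y]
    (X X₁ : Set (ℝ × ℝ))
    (sq : ℕ → Set (ℝ × ℝ))
    (hdyadic : ∀ n, ∃ i j k, sq n = dyadicSquare i j k)
    (hfr : ∀ n, frontier (sq n) ⊆ X₁)
    (hcover : X \ X₁ = ⋃ n, interior (sq n))
    (hnull : ∀ ε > 0, {n | ε ≤ Metric.diam (sq n)}.Finite)
    (f : ℝ × ℝ → Y) (hf : ContinuousOn f X₁)
    (h : ℕ → ℝ × ℝ → Y)
    (hhcont : ∀ n, ContinuousOn (h n) (sq n))
    (hhext : ∀ n, ∀ x ∈ frontier (sq n), h n x = f x)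
    (hhdiam : ∀ n, Metric.diam (h n '' sq n) ≤ 2 * Metric.diam (f '' frontier (sq n)))
    (g : ℝ × ℝ → Y)
    (hg₁ : ∀ x ∈ X₁, g x = f x)
    (hg₂ : ∀ n, ∀ x ∈ sq n, g x = h n x) :
    ContinuousOn g X := by
  have hcpt (n : ℕ) : IsCompact (sq n) := by
    obtain ⟨i, j, k, hn⟩ := hdyadic n
    exact hn ▸ isCompact_dyadicSquare i j k
  exact continuousOn_glue hcpt hfr hcover hnull hf hhcont hhext hhdiam hg₁ hg₂

/-- Gluing a continuous map on a one-skeleton with controlled extensions over a null family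
of dyadic squares yields a continuous map. -/
theorem glue_extensions_continuous
    {Y : Type*} [MetricSpace Y]
    (X X₁ : Set (ℝ × ℝ)) (hX : IsCompact X) (hsub : X₁ ⊆ X) (hX₁ : IsClosed X₁)
    (sq : ℕ → Set (ℝ × ℝ))
    (hdyadic : ∀ n, ∃ i j k, sq n = dyadicSquare i j k)
    (hsqX : ∀ n, sq n ⊆ X)
    (hfr : ∀ n, frontier (sq n) ⊆ X₁)
    (hdisj : Pairwise fun m n => Disjoint (interior (sq m)) (interior (sq n)))
    (hcover : X \ X₁ = ⋃ n, interior (sq n))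
    (hnull : ∀ ε > 0, {n | ε ≤ Metric.diam (sq n)}.Finite)
    (f : ℝ × ℝ → Y) (hf : ContinuousOn f X₁)
    (h : ℕ → ℝ × ℝ → Y)
    (hhcont : ∀ n, ContinuousOn (h n) (sq n))
    (hhext : ∀ n, ∀ x ∈ frontier (sq n), h n x = f x)
    (hhdiam : ∀ n, Metric.diam (h n '' sq n) ≤ 2 * Metric.diam (f '' frontier (sq n)))
    (g : ℝ × ℝ → Y)
    (hg₁ : ∀ x ∈ X₁, g x = f x)
    (hg₂ : ∀ n, ∀ x ∈ sq n, g x = h n x) :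
    ContinuousOn g X :=
  glue_extensions_continuous_general X X₁ sq hdyadic hfr hcover hnull f hf h hhcont hhext hhdiam g
    hg₁ hg₂
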